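/- Let R be a commutative ring, p ≥ 1 a natural number, and A a function on triples (n,r,m) of integers with n,m ≥ 1 and r² < 4nm, with values in R. Define the pullback coefficients ϖ(A)(n,m) = Σ_{r ∈ ℤ, r² < 4nm} A(n,r,m). Define (V^{(2)}A)(n,r,m) = A(n/p, r/p, m/p) if p divides n, r, m, and 0 otherwise, and define (V×V ϖ(A))(n,m) = ϖ(A)(n/p, m/p) if p ∣ n and p ∣ m, else 0. Then ϖ(V^{(2)}A) = V×V ϖ(A), i.e. for all n, m ≥ 1: Σ_{r² < 4nm} (V^{(2)}A)(n,r,m) equals ϖ(A)(n/p,m/p) if p divides both n and m and 0 otherwise. -/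

import Mathlib

/-- The finite set of integers `r` with `r² < 4nm`. -/
noncomputable def diagSet (n m : ℕ) : Finset ℤ :=
  (Finset.Icc (-(4 * n * m : ℤ)) (4 * n * m)).filter (fun r => r ^ 2 < 4 * n * m)

/-- Pullback-to-the-diagonal coefficients: `ϖ(A)(n,m) = ∑_{r² < 4nm} A(n,r,m)`. -/
noncomputable def pullbackCoef {R : Type*} [CommRing R] (A : ℕ → ℤ → ℕ → R) (n m : ℕ) : R :=
  ∑ r ∈ diagSet n m, A n r m

open Finset

theorem mem_diagSet {n m : ℕ} {r : ℤ} : r ∈ diagSet n m ↔ r ^ 2 < 4 * n * m := by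
  refine ⟨fun h => (mem_filter.1 h).2, fun h => mem_filter.2 ⟨mem_Icc.2 ?_, h⟩⟩
  have : |r| ≤ r ^ 2 := by simpa using Int.natAbs_le_self_sq r
  exact abs_le.1 (by linarith)

theorem mul_mem_diagSet_mul_iff {p a b : ℕ} (hp : p ≠ 0) {s : ℤ} :
    (p : ℤ) * s ∈ diagSet (p * a) (p * b) ↔ s ∈ diagSet a b := by
  have hp2 : (0 : ℤ) < (p : ℤ) ^ 2 := by positivity
  simp only [mem_diagSet, Nat.cast_mul]
  rw [show ((p : ℤ) * s) ^ 2 = (p : ℤ) ^ 2 * s ^ 2 by ring,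
    show 4 * ((p : ℤ) * a) * (p * b) = (p : ℤ) ^ 2 * (4 * a * b) by ring]
  exact mul_lt_mul_iff_right₀ hp2

theorem filter_dvd_diagSet_mul {p a b : ℕ} (hp : p ≠ 0) :
    (diagSet (p * a) (p * b)).filter ((p : ℤ) ∣ ·) = (diagSet a b).image ((p : ℤ) * ·) := by
  ext r
  simp only [mem_filter, mem_image]
  constructor
  · rintro ⟨hr, s, rfl⟩
    exact ⟨s, (mul_mem_diagSet_mul_iff hp).1 hr, rfl⟩
  · rintro ⟨s, hs, rfl⟩
    exact ⟨(mul_mem_diagSet_mul_iff hp).2 hs, dvd_mul_right _ _⟩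

theorem sum_diagSet_mul_ite_dvd {M : Type*} [AddCommMonoid M] {p a b : ℕ} (hp : p ≠ 0)
    (f : ℤ → M) :
    ∑ r ∈ diagSet (p * a) (p * b), (if (p : ℤ) ∣ r then f (r / p) else 0) =
      ∑ s ∈ diagSet a b, f s := by
  have hp' : (p : ℤ) ≠ 0 := by exact_mod_cast hp
  rw [← sum_filter, filter_dvd_diagSet_mul hp, sum_image fun _ _ _ _ h => mul_left_cancel₀ hp' h]
  simp only [Int.mul_ediv_cancel_left _ hp']

theorem stmt_5_general {R : Type*} [CommRing R] (p : ℕ) (A : ℕ → ℤ → ℕ → R) :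
    ∀ n m : ℕ, 1 ≤ n → 1 ≤ m →
      (∑ r ∈ diagSet n m,
          (if p ∣ n ∧ (p : ℤ) ∣ r ∧ p ∣ m then A (n / p) (r / p) (m / p) else 0))
        = if p ∣ n ∧ p ∣ m then pullbackCoef A (n / p) (m / p) else 0 := by
  intro n m hn _
  by_cases hnm : p ∣ n ∧ p ∣ m
  · obtain ⟨⟨a, rfl⟩, ⟨b, rfl⟩⟩ := hnm
    have hp : p ≠ 0 := by rintro rfl; simp at hn
    simp only [dvd_mul_right, true_and, and_true, if_true,
      Nat.mul_div_cancel_left _ (Nat.pos_of_ne_zero hp)]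
    exact sum_diagSet_mul_ite_dvd hp (A a · b)
  · rw [if_neg hnm]
    exact sum_eq_zero fun r _ => if_neg fun h => hnm ⟨h.1, h.2.2⟩

theorem stmt_5 {R : Type*} [CommRing R] (p : ℕ) (hp : 1 ≤ p) (A : ℕ → ℤ → ℕ → R) :
    ∀ n m : ℕ, 1 ≤ n → 1 ≤ m →
      (∑ r ∈ diagSet n m,
          (if p ∣ n ∧ (p : ℤ) ∣ r ∧ p ∣ m then A (n / p) (r / p) (m / p) else 0))
        = if p ∣ n ∧ p ∣ m then pullbackCoef A (n / p) (m / p) else 0 :=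
  stmt_5_general p A
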